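/- arXiv:1901.06686 — 3 statements merged into one kernel-verified Lean document; each statement's English description precedes it below -/
import Mathlib

section
/- Assume (H1). Let (u, v1, v2, h) be a classical solution of the FBP on [0, T] with admissible initial data (u0, h0), and suppose that sup_{0 ≤ x ≤ h(t)} u(t,x) > M0 for every t ∈ [0, T]. Then the function t ↦ sup_{0 ≤ x ≤ h(t)} u(t,x) is nonincreasing on [0, T]. -/
open Set Filter Topology

/-- positive part of a real number -/
noncomputable def pp (x : ℝ) : ℝ := max x 0

/-- the constant M from the paper -/
noncomputable def Mconst (χ1 χ2 lam1 lam2 μ1 μ2 : ℝ) : ℝ :=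
  min ((1 / lam2) * (pp (χ2 * μ2 * lam2 - χ1 * μ1 * lam1) + χ1 * μ1 * pp (lam1 - lam2)))
      ((1 / lam1) * (pp (χ2 * μ2 * lam2 - χ1 * μ1 * lam1) + χ2 * μ2 * pp (lam1 - lam2)))

/-- the constant K from the paper -/
noncomputable def Kconst (χ1 χ2 lam1 lam2 μ1 μ2 : ℝ) : ℝ :=
  min ((1 / lam2) * (|χ1 * μ1 * lam1 - χ2 * μ2 * lam2| + χ1 * μ1 * |lam1 - lam2|))
      ((1 / lam1) * (|χ1 * μ1 * lam1 - χ2 * μ2 * lam2| + χ2 * μ2 * |lam1 - lam2|))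

/-- infimum of a coefficient function over ℝ × [0,∞) -/
noncomputable def infOn (f : ℝ → ℝ → ℝ) : ℝ := sInf {y | ∃ t x, 0 ≤ x ∧ f t x = y}

/-- supremum of a coefficient function over ℝ × [0,∞) -/
noncomputable def supOn (f : ℝ → ℝ → ℝ) : ℝ := sSup {y | ∃ t x, 0 ≤ x ∧ f t x = y}

/-- the constant M0 from the paper -/
noncomputable def M0const (χ1 χ2 lam1 lam2 μ1 μ2 : ℝ) (a b : ℝ → ℝ → ℝ) : ℝ :=
  supOn a / (infOn b + χ2 * μ2 - χ1 * μ1 - Mconst χ1 χ2 lam1 lam2 μ1 μ2)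

/-- the constant m0 from the paper -/
noncomputable def m0const (χ1 χ2 lam1 lam2 μ1 μ2 : ℝ) (a b : ℝ → ℝ → ℝ) : ℝ :=
  infOn a * (infOn b - (1 + supOn a / infOn a) * χ1 * μ1 + χ2 * μ2 - Mconst χ1 χ2 lam1 lam2 μ1 μ2) /
    ((infOn b - χ1 * μ1 + χ2 * μ2 - Mconst χ1 χ2 lam1 lam2 μ1 μ2) * (supOn b - χ1 * μ1 + χ2 * μ2))

/-- a bounded C¹ coefficient function on ℝ × [0,∞) with positive infimum -/
structure Coeff (f : ℝ → ℝ → ℝ) : Prop where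
  bdd : ∃ C, ∀ t x, 0 ≤ x → |f t x| ≤ C
  smooth : ContDiffOn ℝ 1 (Function.uncurry f) (univ ×ˢ Ici 0)
  inf_pos : 0 < infOn f

/-- admissible initial data for the free boundary problem -/
structure AdmissibleInit (u0 : ℝ → ℝ) (h0 : ℝ) : Prop where
  h0_pos : 0 < h0
  smooth : ContDiffOn ℝ 2 u0 (Icc 0 h0)
  nonneg : ∀ x ∈ Icc 0 h0, 0 ≤ u0 x
  neumann : deriv u0 0 = 0
  dirichlet : u0 h0 = 0

/-- A classical solution of the free boundary problem (FBP) on the time interval `J`,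
with `Jr ⊆ J` the set of times strictly above the initial time (where the parabolic
regularity and the parabolic equation are required). -/
structure IsSol (ν χ1 χ2 lam1 lam2 μ1 μ2 : ℝ) (a b : ℝ → ℝ → ℝ)
    (J Jr : Set ℝ) (u v1 v2 : ℝ → ℝ → ℝ) (h : ℝ → ℝ) : Prop where
  h_pos : ∀ t ∈ J, 0 < h t
  /-- h is C¹ and satisfies the Stefan condition h'(t) = -ν uₓ(t,h(t)) -/
  h_deriv : ∀ t ∈ J, HasDerivAt h (-(ν * deriv (u t) (h t))) t
  h_deriv_cont : ContinuousOn (deriv h) J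
  u_nonneg : ∀ t ∈ J, ∀ x ∈ Icc 0 (h t), 0 ≤ u t x
  v1_nonneg : ∀ t ∈ J, ∀ x ∈ Icc 0 (h t), 0 ≤ v1 t x
  v2_nonneg : ∀ t ∈ J, ∀ x ∈ Icc 0 (h t), 0 ≤ v2 t x
  u_cont : ContinuousOn (Function.uncurry u) {p : ℝ × ℝ | p.1 ∈ J ∧ p.2 ∈ Icc 0 (h p.1)}
  v1_cont : ContinuousOn (Function.uncurry v1) {p : ℝ × ℝ | p.1 ∈ J ∧ p.2 ∈ Icc 0 (h p.1)}
  v2_cont : ContinuousOn (Function.uncurry v2) {p : ℝ × ℝ | p.1 ∈ J ∧ p.2 ∈ Icc 0 (h p.1)}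
  u_diff_x : ∀ t ∈ Jr, ∀ x ∈ Icc 0 (h t),
    DifferentiableAt ℝ (u t) x ∧ DifferentiableAt ℝ (deriv (u t)) x
  u_diff_t : ∀ t ∈ Jr, ∀ x ∈ Icc 0 (h t), DifferentiableAt ℝ (fun s => u s x) t
  v1_diff_x : ∀ t ∈ J, ∀ x ∈ Icc 0 (h t),
    DifferentiableAt ℝ (v1 t) x ∧ DifferentiableAt ℝ (deriv (v1 t)) x
  v2_diff_x : ∀ t ∈ J, ∀ x ∈ Icc 0 (h t),
    DifferentiableAt ℝ (v2 t) x ∧ DifferentiableAt ℝ (deriv (v2 t)) x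
  ux_cont : ContinuousOn (fun p : ℝ × ℝ => deriv (u p.1) p.2)
    {p : ℝ × ℝ | p.1 ∈ Jr ∧ p.2 ∈ Icc 0 (h p.1)}
  uxx_cont : ContinuousOn (fun p : ℝ × ℝ => deriv (deriv (u p.1)) p.2)
    {p : ℝ × ℝ | p.1 ∈ Jr ∧ p.2 ∈ Icc 0 (h p.1)}
  ut_cont : ContinuousOn (fun p : ℝ × ℝ => deriv (fun s => u s p.2) p.1)
    {p : ℝ × ℝ | p.1 ∈ Jr ∧ p.2 ∈ Icc 0 (h p.1)}
  v1x_cont : ContinuousOn (fun p : ℝ × ℝ => deriv (v1 p.1) p.2)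
    {p : ℝ × ℝ | p.1 ∈ J ∧ p.2 ∈ Icc 0 (h p.1)}
  v2x_cont : ContinuousOn (fun p : ℝ × ℝ => deriv (v2 p.1) p.2)
    {p : ℝ × ℝ | p.1 ∈ J ∧ p.2 ∈ Icc 0 (h p.1)}
  /-- the parabolic equation for u -/
  pde : ∀ t ∈ Jr, ∀ x ∈ Ioo 0 (h t),
    deriv (fun s => u s x) t
      = deriv (deriv (u t)) x
        - χ1 * deriv (fun y => u t y * deriv (v1 t) y) x
        + χ2 * deriv (fun y => u t y * deriv (v2 t) y) x
        + u t x * (a t x - b t x * u t x)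
  /-- the elliptic equation for v1 -/
  v1_ode : ∀ t ∈ J, ∀ x ∈ Ioo 0 (h t),
    deriv (deriv (v1 t)) x - lam1 * v1 t x + μ1 * u t x = 0
  /-- the elliptic equation for v2 -/
  v2_ode : ∀ t ∈ J, ∀ x ∈ Ioo 0 (h t),
    deriv (deriv (v2 t)) x - lam2 * v2 t x + μ2 * u t x = 0
  /-- boundary conditions at x = 0 -/
  bc0 : ∀ t ∈ J, deriv (u t) 0 = 0 ∧ deriv (v1 t) 0 = 0 ∧ deriv (v2 t) 0 = 0
  /-- boundary conditions at x = h(t) -/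
  bch : ∀ t ∈ J, u t (h t) = 0 ∧ deriv (v1 t) (h t) = 0 ∧ deriv (v2 t) (h t) = 0

/-
If `sup u(t₂, ·) > sup u(t₁, ·)` for some `t₁ < t₂`, then for small `δ > 0` the function
`u(t, x) - δ t` on the region `t₁ ≤ t ≤ t₂, 0 ≤ x ≤ h(t)` attains its maximum at a point `(t, x)`
with `t > t₁` and `x < h(t)` (because `u(t, h(t)) = 0`). There `x` maximizes `u(t, ·)`, so
`u_x = 0`, `u_xx ≤ 0` and `u_t ≥ δ > 0`. On the other hand, with `U = u(t, x)`, the Neumann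
maximum principle for the elliptic equations gives `χ₂λ₂v₂ - χ₁λ₁v₁ ≤ M U`, and then the equation
for `u` yields `u_t ≤ U (sup a - (inf b + χ₂μ₂ - χ₁μ₁ - M) U) ≤ 0` since `U > M₀`.
-/

theorem not_eventually_deriv2_pos_of_isMaxOn {f : ℝ → ℝ} {a b x₀ : ℝ} (hab : a < b)
    (hx₀ : x₀ ∈ Icc a b) (hf : ContinuousOn f (Icc a b)) (hmax : IsMaxOn f (Icc a b) x₀)
    (hf₀ : HasDerivAt f 0 x₀) : ¬∀ᶠ y in 𝓝[Ioo a b] x₀, 0 < deriv^[2] f y := by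
  intro hpos
  obtain ⟨ε, hε, hball⟩ := Metric.mem_nhdsWithin_iff.mp hpos
  set I := Icc a b ∩ Icc (x₀ - ε / 2) (x₀ + ε / 2)
  have hI : StrictConvexOn ℝ I f := by
    refine strictConvexOn_of_deriv2_pos ((convex_Icc a b).inter (convex_Icc _ _))
      (hf.mono inter_subset_left) fun y hy => hball ⟨?_, ?_⟩
    all_goals rw [interior_inter, interior_Icc, interior_Icc] at hy
    · rw [Metric.mem_ball, Real.dist_eq, abs_lt]; constructor <;> linarith [hy.2.1, hy.2.2]
    · exact hy.1
  have hx₀I : x₀ ∈ I := ⟨hx₀, by constructor <;> linarith⟩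
  rcases hx₀.2.lt_or_eq with hx₀b | rfl
  · set y := min b (x₀ + ε / 2)
    have hxy : x₀ < y := lt_min hx₀b (by linarith)
    have hyI : y ∈ I := ⟨⟨hx₀.1.trans hxy.le, min_le_left _ _⟩, by linarith, min_le_right _ _⟩
    have hslope := hI.lt_slope_of_hasDerivAt hx₀I hyI hxy hf₀
    rw [slope_def_field, lt_div_iff₀ (by linarith), zero_mul] at hslope
    exact (hmax hyI.1).not_gt (sub_pos.mp hslope)
  · set y := max a (x₀ - ε / 2)
    have hyx : y < x₀ := max_lt hab (by linarith)
    have hyI : y ∈ I := ⟨⟨le_max_left _ _, hyx.le⟩, le_max_right _ _, by linarith⟩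
    have hslope := hI.slope_lt_of_hasDerivAt hyI hx₀I hyx hf₀
    rw [slope_def_field, div_lt_iff₀ (by linarith), zero_mul] at hslope
    exact (hmax hyI.1).not_gt (sub_neg.mp hslope)

theorem IsMaxOn.deriv2_nonpos {f : ℝ → ℝ} {a b x₀ : ℝ} (hab : a < b) (hx₀ : x₀ ∈ Icc a b)
    (hf : ContinuousOn f (Icc a b)) (hmax : IsMaxOn f (Icc a b) x₀) (hf₀ : HasDerivAt f 0 x₀)
    (hf'' : ContinuousWithinAt (deriv^[2] f) (Icc a b) x₀) : deriv^[2] f x₀ ≤ 0 := by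
  by_contra! hpos
  exact not_eventually_deriv2_pos_of_isMaxOn hab hx₀ hf hmax hf₀ <|
    nhdsWithin_mono x₀ Ioo_subset_Icc_self (hf''.eventually (lt_mem_nhds hpos))

theorem mul_le_of_neumann_of_sub_le_deriv2 {z z' z'' : ℝ → ℝ} {a b lam K : ℝ} (hab : a < b)
    (hlam : 0 ≤ lam) (hz : ∀ x ∈ Icc a b, HasDerivAt z (z' x) x)
    (hz' : ∀ x ∈ Ioo a b, HasDerivAt z' (z'' x) x)
    (ha : z' a = 0) (hb : z' b = 0) (h : ∀ x ∈ Ioo a b, lam * z x - K ≤ z'' x) :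
    ∀ x ∈ Icc a b, lam * z x ≤ K := by
  by_contra! ⟨x, hx, hKx⟩
  have hzc : ContinuousOn z (Icc a b) := fun y hy => (hz y hy).continuousAt.continuousWithinAt
  obtain ⟨x₀, hx₀, hmax⟩ := isCompact_Icc.exists_isMaxOn (nonempty_Icc.2 hab.le) hzc
  have hz₀ : HasDerivAt z 0 x₀ := by
    convert hz x₀ hx₀ using 1
    rcases hx₀.1.eq_or_lt with rfl | hax₀
    · exact ha.symm
    rcases hx₀.2.eq_or_lt with rfl | hx₀b
    · exact hb.symm
    exact ((hmax.isLocalMax (Icc_mem_nhds hax₀ hx₀b)).hasDerivAt_eq_zero (hz x₀ hx₀)).symm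
  refine not_eventually_deriv2_pos_of_isMaxOn hab hx₀ hzc hmax hz₀ ?_
  have hK : K < lam * z x₀ := hKx.trans_le (mul_le_mul_of_nonneg_left (hmax hx) hlam)
  have hnear : ∀ᶠ y in 𝓝 x₀, K < lam * z y :=
    ((hz x₀ hx₀).continuousAt.const_mul lam).eventually (lt_mem_nhds hK)
  filter_upwards [nhdsWithin_le_nhds hnear, self_mem_nhdsWithin] with y hKy hy
  have hderiv : deriv z =ᶠ[𝓝 y] z' :=
    eventually_of_mem (Ioo_mem_nhds hy.1 hy.2) fun w hw => (hz w (Ioo_subset_Icc_self hw)).deriv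
  have hz'' : deriv^[2] z y = z'' y := hderiv.deriv_eq.trans (hz' y hy).deriv
  linarith [h y hy]

theorem HasDerivAt.le_of_eventually_sub_mul_le_left {f : ℝ → ℝ} {f' δ t : ℝ}
    (hf : HasDerivAt f f' t) (h : ∀ᶠ s in 𝓝[<] t, f s - δ * s ≤ f t - δ * t) : δ ≤ f' := by
  have hslope : Tendsto (slope f t) (𝓝[<] t) (𝓝 f') :=
    (hasDerivAt_iff_tendsto_slope.mp hf).mono_left (nhdsWithin_mono t fun s hs => ne_of_lt hs)
  refine ge_of_tendsto hslope ?_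
  filter_upwards [h, self_mem_nhdsWithin] with s hs hst
  rw [slope_def_field, le_div_iff_of_neg (sub_neg.mpr hst)]
  linarith

theorem ContinuousOn.slice_Icc {F : ℝ × ℝ → ℝ} {A : Set ℝ} {h : ℝ → ℝ}
    (hF : ContinuousOn F {p : ℝ × ℝ | p.1 ∈ A ∧ p.2 ∈ Icc 0 (h p.1)}) {t : ℝ} (ht : t ∈ A) :
    ContinuousOn (fun x => F (t, x)) (Icc 0 (h t)) :=
  hF.comp (Continuous.prodMk_right t).continuousOn fun _ hx => ⟨ht, hx⟩

theorem isCompact_subgraph {h : ℝ → ℝ} {t₁ t₂ : ℝ} (hh : ContinuousOn h (Icc t₁ t₂)) :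
    IsCompact {p : ℝ × ℝ | p.1 ∈ Icc t₁ t₂ ∧ p.2 ∈ Icc 0 (h p.1)} := by
  obtain ⟨C, hC⟩ := (isCompact_Icc.image_of_continuousOn hh).bddAbove
  have hclosed : IsClosed ((Icc t₁ t₂ ×ˢ Ici 0) ∩ (fun p : ℝ × ℝ => h p.1 - p.2) ⁻¹' Ici 0) :=
    ContinuousOn.preimage_isClosed_of_isClosed
      ((hh.comp continuousOn_fst fun _ hp => hp.1).sub continuousOn_snd)
      (isClosed_Icc.prod isClosed_Ici) isClosed_Ici
  refine ((isCompact_Icc (a := t₁) (b := t₂)).prod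
    (isCompact_Icc (a := 0) (b := C))).of_isClosed_subset ?_ ?_
  · convert hclosed using 1
    ext p
    simp only [mem_ofPred_eq, mem_Icc, mem_inter_iff, mem_prod, mem_Ici, mem_preimage, sub_nonneg]
    tauto
  · rintro p ⟨hp₁, hp₂⟩
    exact ⟨hp₁, hp₂.1, hp₂.2.trans (hC (mem_image_of_mem h hp₁))⟩

theorem exists_interior_max_sub_mul_of_lt {u : ℝ → ℝ → ℝ} {h : ℝ → ℝ} {t₁ t₂ S x₂ : ℝ}
    (ht : t₁ < t₂) (hh : ContinuousOn h (Icc t₁ t₂))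
    (hu : ContinuousOn (Function.uncurry u) {p : ℝ × ℝ | p.1 ∈ Icc t₁ t₂ ∧ p.2 ∈ Icc 0 (h p.1)})
    (hS : ∀ x ∈ Icc 0 (h t₁), u t₁ x ≤ S) (hbdry : ∀ t ∈ Icc t₁ t₂, u t (h t) ≤ S)
    (hx₂ : x₂ ∈ Icc 0 (h t₂)) (hSx₂ : S < u t₂ x₂) :
    ∃ δ > 0, ∃ t ∈ Ioc t₁ t₂, ∃ x ∈ Ico 0 (h t),
      ∀ s ∈ Icc t₁ t₂, ∀ y ∈ Icc 0 (h s), u s y - δ * s ≤ u t x - δ * t := by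
  obtain ⟨δ, hδ, hδS⟩ := exists_pos_mul_lt (sub_pos.mpr hSx₂) (t₂ - t₁)
  have hx₂D : (t₂, x₂) ∈ {p : ℝ × ℝ | p.1 ∈ Icc t₁ t₂ ∧ p.2 ∈ Icc 0 (h p.1)} :=
    ⟨⟨ht.le, le_rfl⟩, hx₂⟩
  obtain ⟨⟨t, x⟩, ⟨htD, hxD⟩, hmax⟩ := (isCompact_subgraph hh).exists_isMaxOn ⟨_, hx₂D⟩
    (hu.sub (continuous_const.mul continuous_fst).continuousOn)
  simp only at htD hxD
  -- on `t = t₁` and on `x = h t` the function is at most `S - δ t₁`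
  have hbig : S - δ * t₁ < u t x - δ * t := by
    have hmax₂ : u t₂ x₂ - δ * t₂ ≤ u t x - δ * t := hmax hx₂D
    linarith
  refine ⟨δ, hδ, t, ⟨htD.1.lt_of_ne ?_, htD.2⟩, x, ⟨hxD.1, hxD.2.lt_of_ne ?_⟩,
    fun s hs y hy => isMaxOn_iff.mp hmax (s, y) ⟨hs, hy⟩⟩
  · rintro rfl
    linarith [hS x hxD]
  · intro hx
    rw [hx] at hbig
    linarith [hbdry t htD, mul_le_mul_of_nonneg_left htD.1 hδ.le]

namespace Coeff

variable {f : ℝ → ℝ → ℝ}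

theorem le_supOn (hf : Coeff f) {t x : ℝ} (hx : 0 ≤ x) : f t x ≤ supOn f := by
  obtain ⟨C, hC⟩ := hf.bdd
  exact le_csSup ⟨C, by rintro _ ⟨s, y, hy, rfl⟩; exact (abs_le.mp (hC s y hy)).2⟩ ⟨t, x, hx, rfl⟩

theorem infOn_le (hf : Coeff f) {t x : ℝ} (hx : 0 ≤ x) : infOn f ≤ f t x := by
  obtain ⟨C, hC⟩ := hf.bdd
  exact csInf_le ⟨-C, by rintro _ ⟨s, y, hy, rfl⟩; exact (abs_le.mp (hC s y hy)).1⟩ ⟨t, x, hx, rfl⟩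

theorem continuousOn_slice (hf : Coeff f) (t : ℝ) : ContinuousOn (f t) (Ici 0) :=
  hf.smooth.continuousOn.uncurry_left t (mem_univ t)

end Coeff

theorem mul_add_mul_le_pp {A d χ w U p q : ℝ} (hw : 0 ≤ w) (hwU : w ≤ U) (hχ : 0 ≤ χ)
    (hp : 0 ≤ p) (hpq : p ≤ q) : A * w + χ * d * p ≤ pp A * U + χ * pp d * q := by
  have h₁ : A * w ≤ pp A * U := (mul_le_mul_of_nonneg_right (le_max_left A 0) hw).trans
    (mul_le_mul_of_nonneg_left hwU (le_max_right A 0))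
  have h₂ : χ * d * p ≤ χ * pp d * q := mul_le_mul
    (mul_le_mul_of_nonneg_left (le_max_left d 0) hχ) hpq hp (mul_nonneg hχ (le_max_right d 0))
  linarith

structure IsNeumannSol (L lam μ : ℝ) (w v : ℝ → ℝ) : Prop where
  differentiableAt : ∀ x ∈ Icc 0 L, DifferentiableAt ℝ v x
  differentiableAt_deriv : ∀ x ∈ Ioo 0 L, DifferentiableAt ℝ (deriv v) x
  ode : ∀ x ∈ Ioo 0 L, deriv (deriv v) x - lam * v x + μ * w x = 0
  deriv_zero : deriv v 0 = 0
  deriv_right : deriv v L = 0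

namespace IsNeumannSol

variable {L lam lam₁ lam₂ μ μ₁ μ₂ U : ℝ} {w v v₁ v₂ : ℝ → ℝ}

theorem mul_le (hv : IsNeumannSol L lam μ w v) (hL : 0 < L) (hlam : 0 ≤ lam) (hμ : 0 ≤ μ)
    (hwU : ∀ x ∈ Ioo 0 L, w x ≤ U) : ∀ x ∈ Icc 0 L, lam * v x ≤ μ * U :=
  mul_le_of_neumann_of_sub_le_deriv2 hL hlam (fun x hx => (hv.differentiableAt x hx).hasDerivAt)
    (fun x hx => (hv.differentiableAt_deriv x hx).hasDerivAt) hv.deriv_zero hv.deriv_right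
    fun x hx => by linarith [hv.ode x hx, mul_le_mul_of_nonneg_left (hwU x hx) hμ]

theorem mul_sub_le (hv₁ : IsNeumannSol L lam₁ μ₁ w v₁) (hv₂ : IsNeumannSol L lam₂ μ₂ w v₂) (hL : 0 < L)
    {lam c₁ c₂ K : ℝ} (hlam : 0 ≤ lam)
    (h : ∀ x ∈ Ioo 0 L, lam * (c₂ * v₂ x - c₁ * v₁ x) - K ≤
      c₂ * (lam₂ * v₂ x - μ₂ * w x) - c₁ * (lam₁ * v₁ x - μ₁ * w x)) :
    ∀ x ∈ Icc 0 L, lam * (c₂ * v₂ x - c₁ * v₁ x) ≤ K := by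
  refine mul_le_of_neumann_of_sub_le_deriv2 (z' := fun x => c₂ * deriv v₂ x - c₁ * deriv v₁ x)
    (z'' := fun x => c₂ * deriv (deriv v₂) x - c₁ * deriv (deriv v₁) x) hL hlam
    (fun x hx => ((hv₂.differentiableAt x hx).hasDerivAt.const_mul c₂).sub
      ((hv₁.differentiableAt x hx).hasDerivAt.const_mul c₁))
    (fun x hx => ((hv₂.differentiableAt_deriv x hx).hasDerivAt.const_mul c₂).sub
      ((hv₁.differentiableAt_deriv x hx).hasDerivAt.const_mul c₁))
    (by simp [hv₁.deriv_zero, hv₂.deriv_zero]) (by simp [hv₁.deriv_right, hv₂.deriv_right])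
    fun x hx => ?_
  have h₁ : deriv (deriv v₁) x = lam₁ * v₁ x - μ₁ * w x := by linarith [hv₁.ode x hx]
  have h₂ : deriv (deriv v₂) x = lam₂ * v₂ x - μ₂ * w x := by linarith [hv₂.ode x hx]
  simpa only [h₁, h₂] using h x hx

/-- `z = χ₂λ₂v₂ - χ₁λ₁v₁` satisfies
`z'' = λ₂ z - χ₁λ₁(λ₁ - λ₂) v₁ - A w = λ₁ z - χ₂λ₂(λ₁ - λ₂) v₂ - A w` with
`A = χ₂μ₂λ₂ - χ₁μ₁λ₁`; the maximum principle with `λ₂`, resp. `λ₁`, gives the two bounds whose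
minimum is `Mconst`. -/
theorem sub_le_Mconst_mul (hv₁ : IsNeumannSol L lam₁ μ₁ w v₁) (hv₂ : IsNeumannSol L lam₂ μ₂ w v₂)
    (hL : 0 < L) (hlam₁ : 0 < lam₁) (hlam₂ : 0 < lam₂) {χ₁ χ₂ : ℝ} (hχ₁ : 0 ≤ χ₁) (hχ₂ : 0 ≤ χ₂)
    (hμ₁ : 0 ≤ μ₁) (hμ₂ : 0 ≤ μ₂) (hw : ∀ x ∈ Ioo 0 L, 0 ≤ w x) (hwU : ∀ x ∈ Ioo 0 L, w x ≤ U)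
    (hv₁₀ : ∀ x ∈ Ioo 0 L, 0 ≤ v₁ x) (hv₂₀ : ∀ x ∈ Ioo 0 L, 0 ≤ v₂ x) :
    ∀ x ∈ Icc 0 L, χ₂ * lam₂ * v₂ x - χ₁ * lam₁ * v₁ x ≤ Mconst χ₁ χ₂ lam₁ lam₂ μ₁ μ₂ * U := by
  intro x hx
  set A := χ₂ * μ₂ * lam₂ - χ₁ * μ₁ * lam₁
  have hb₁ := hv₁.mul_le hL hlam₁.le hμ₁ hwU
  have hb₂ := hv₂.mul_le hL hlam₂.le hμ₂ hwU
  have hz₂ := hv₁.mul_sub_le hv₂ hL hlam₂.le (c₁ := χ₁ * lam₁) (c₂ := χ₂ * lam₂)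
    (K := pp A * U + χ₁ * pp (lam₁ - lam₂) * (μ₁ * U)) (fun y hy => by
      have hbound := mul_add_mul_le_pp (A := A) (d := lam₁ - lam₂) (hw y hy) (hwU y hy) hχ₁
        (mul_nonneg hlam₁.le (hv₁₀ y hy)) (hb₁ y (Ioo_subset_Icc_self hy))
      linarith) x hx
  have hz₁ := hv₁.mul_sub_le hv₂ hL hlam₁.le (c₁ := χ₁ * lam₁) (c₂ := χ₂ * lam₂)
    (K := pp A * U + χ₂ * pp (lam₁ - lam₂) * (μ₂ * U)) (fun y hy => by
      have hbound := mul_add_mul_le_pp (A := A) (d := lam₁ - lam₂) (hw y hy) (hwU y hy) hχ₂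
        (mul_nonneg hlam₂.le (hv₂₀ y hy)) (hb₂ y (Ioo_subset_Icc_self hy))
      linarith) x hx
  rcases min_choice ((1 / lam₂) * (pp A + χ₁ * μ₁ * pp (lam₁ - lam₂)))
    ((1 / lam₁) * (pp A + χ₂ * μ₂ * pp (lam₁ - lam₂))) with hM | hM <;> rw [Mconst, hM]
  · calc _ ≤ (pp A * U + χ₁ * pp (lam₁ - lam₂) * (μ₁ * U)) / lam₂ := by
          rw [le_div_iff₀ hlam₂]; linarith
      _ = _ := by ring
  · calc _ ≤ (pp A * U + χ₂ * pp (lam₁ - lam₂) * (μ₂ * U)) / lam₁ := by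
          rw [le_div_iff₀ hlam₁]; linarith
      _ = _ := by ring

end IsNeumannSol

/-- The right-hand side of the equation for `u`, with the chemotactic terms expanded by the product
rule and the elliptic equations `v_i'' = λ_i v_i - μ_i u`. -/
noncomputable def expandedRhs (χ1 χ2 lam1 lam2 μ1 μ2 : ℝ) (a b u v1 v2 : ℝ → ℝ → ℝ) (t x : ℝ) :
    ℝ :=
  deriv (deriv (u t)) x
    - χ1 * (deriv (u t) x * deriv (v1 t) x + u t x * (lam1 * v1 t x - μ1 * u t x))
    + χ2 * (deriv (u t) x * deriv (v2 t) x + u t x * (lam2 * v2 t x - μ2 * u t x))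
    + u t x * (a t x - b t x * u t x)

namespace IsSol

variable {ν χ1 χ2 lam1 lam2 μ1 μ2 : ℝ} {a b : ℝ → ℝ → ℝ} {J Jr : Set ℝ}
  {u v1 v2 : ℝ → ℝ → ℝ} {h : ℝ → ℝ} {t : ℝ}

theorem isNeumannSol_v1 (hsol : IsSol ν χ1 χ2 lam1 lam2 μ1 μ2 a b J Jr u v1 v2 h) (ht : t ∈ J) :
    IsNeumannSol (h t) lam1 μ1 (u t) (v1 t) where
  differentiableAt x hx := (hsol.v1_diff_x t ht x hx).1
  differentiableAt_deriv x hx := (hsol.v1_diff_x t ht x (Ioo_subset_Icc_self hx)).2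
  ode := hsol.v1_ode t ht
  deriv_zero := (hsol.bc0 t ht).2.1
  deriv_right := (hsol.bch t ht).2.1

theorem isNeumannSol_v2 (hsol : IsSol ν χ1 χ2 lam1 lam2 μ1 μ2 a b J Jr u v1 v2 h) (ht : t ∈ J) :
    IsNeumannSol (h t) lam2 μ2 (u t) (v2 t) where
  differentiableAt x hx := (hsol.v2_diff_x t ht x hx).1
  differentiableAt_deriv x hx := (hsol.v2_diff_x t ht x (Ioo_subset_Icc_self hx)).2
  ode := hsol.v2_ode t ht
  deriv_zero := (hsol.bc0 t ht).2.2
  deriv_right := (hsol.bch t ht).2.2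

theorem continuousOn_expandedRhs (hsol : IsSol ν χ1 χ2 lam1 lam2 μ1 μ2 a b J Jr u v1 v2 h)
    (ha : Coeff a) (hb : Coeff b) (htr : t ∈ Jr) (ht : t ∈ J) :
    ContinuousOn (expandedRhs χ1 χ2 lam1 lam2 μ1 μ2 a b u v1 v2 t) (Icc 0 (h t)) := by
  have hu : ContinuousOn (u t) (Icc 0 (h t)) := hsol.u_cont.slice_Icc ht
  have hux : ContinuousOn (deriv (u t)) (Icc 0 (h t)) := hsol.ux_cont.slice_Icc htr
  have huxx : ContinuousOn (deriv (deriv (u t))) (Icc 0 (h t)) := hsol.uxx_cont.slice_Icc htr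
  have hv1 : ContinuousOn (v1 t) (Icc 0 (h t)) := hsol.v1_cont.slice_Icc ht
  have hv1x : ContinuousOn (deriv (v1 t)) (Icc 0 (h t)) := hsol.v1x_cont.slice_Icc ht
  have hv2 : ContinuousOn (v2 t) (Icc 0 (h t)) := hsol.v2_cont.slice_Icc ht
  have hv2x : ContinuousOn (deriv (v2 t)) (Icc 0 (h t)) := hsol.v2x_cont.slice_Icc ht
  have ha' : ContinuousOn (a t) (Icc 0 (h t)) := (ha.continuousOn_slice t).mono Icc_subset_Ici_self
  have hb' : ContinuousOn (b t) (Icc 0 (h t)) := (hb.continuousOn_slice t).mono Icc_subset_Ici_self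
  unfold expandedRhs
  fun_prop

theorem deriv_time_eq_expandedRhs (hsol : IsSol ν χ1 χ2 lam1 lam2 μ1 μ2 a b J Jr u v1 v2 h)
    (ha : Coeff a) (hb : Coeff b) (htr : t ∈ Jr) (ht : t ∈ J) :
    EqOn (fun x => deriv (fun s => u s x) t) (expandedRhs χ1 χ2 lam1 lam2 μ1 μ2 a b u v1 v2 t)
      (Icc 0 (h t)) := by
  have hinterior : EqOn (fun x => deriv (fun s => u s x) t)
      (expandedRhs χ1 χ2 lam1 lam2 μ1 μ2 a b u v1 v2 t) (Ioo 0 (h t)) := by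
    intro x hx
    have hux := (hsol.u_diff_x t htr x (Ioo_subset_Icc_self hx)).1
    have hv1 : deriv (deriv (v1 t)) x = lam1 * v1 t x - μ1 * u t x := by
      linarith [hsol.v1_ode t ht x hx]
    have hv2 : deriv (deriv (v2 t)) x = lam2 * v2 t x - μ2 * u t x := by
      linarith [hsol.v2_ode t ht x hx]
    dsimp only
    rw [hsol.pde t htr x hx,
      deriv_fun_mul hux ((hsol.isNeumannSol_v1 ht).differentiableAt_deriv x hx),
      deriv_fun_mul hux ((hsol.isNeumannSol_v2 ht).differentiableAt_deriv x hx), hv1, hv2]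
    rfl
  refine hinterior.of_subset_closure (hsol.ut_cont.slice_Icc htr)
    (hsol.continuousOn_expandedRhs ha hb htr ht) Ioo_subset_Icc_self ?_
  rw [closure_Ioo (hsol.h_pos t ht).ne]

theorem deriv_time_nonpos_of_isMaxOn (hsol : IsSol ν χ1 χ2 lam1 lam2 μ1 μ2 a b J Jr u v1 v2 h)
    (hχ1 : 0 ≤ χ1) (hχ2 : 0 ≤ χ2) (hμ1 : 0 ≤ μ1) (hμ2 : 0 ≤ μ2) (hlam1 : 0 < lam1)
    (hlam2 : 0 < lam2) (ha : Coeff a) (hb : Coeff b)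
    (hH1 : χ1 * μ1 - χ2 * μ2 + Mconst χ1 χ2 lam1 lam2 μ1 μ2 < infOn b)
    {x : ℝ} (htr : t ∈ Jr) (ht : t ∈ J) (hx : x ∈ Ico 0 (h t))
    (hmax : IsMaxOn (u t) (Icc 0 (h t)) x) (hM0 : M0const χ1 χ2 lam1 lam2 μ1 μ2 a b < u t x) :
    deriv (fun s => u s x) t ≤ 0 := by
  have hL := hsol.h_pos t ht
  have hxI : x ∈ Icc 0 (h t) := Ico_subset_Icc_self hx
  have hU : 0 ≤ u t x := hsol.u_nonneg t ht x hxI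
  have hux : HasDerivAt (u t) 0 x := by
    have hd := (hsol.u_diff_x t htr x hxI).1.hasDerivAt
    rcases hx.1.eq_or_lt with rfl | hx0
    · rwa [(hsol.bc0 t ht).1] at hd
    · rwa [(hmax.isLocalMax (Icc_mem_nhds hx0 hx.2)).hasDerivAt_eq_zero hd] at hd
  have huxx : deriv (deriv (u t)) x ≤ 0 :=
    hmax.deriv2_nonpos hL hxI (hsol.u_cont.slice_Icc ht) hux (hsol.uxx_cont.slice_Icc htr x hxI)
  have hchem := (hsol.isNeumannSol_v1 ht).sub_le_Mconst_mul (hsol.isNeumannSol_v2 ht) hL hlam1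
    hlam2 hχ1 hχ2 hμ1 hμ2 (fun y hy => hsol.u_nonneg t ht y (Ioo_subset_Icc_self hy))
    (fun y hy => hmax (Ioo_subset_Icc_self hy))
    (fun y hy => hsol.v1_nonneg t ht y (Ioo_subset_Icc_self hy))
    (fun y hy => hsol.v2_nonneg t ht y (Ioo_subset_Icc_self hy)) x hxI
  have hc : 0 < infOn b + χ2 * μ2 - χ1 * μ1 - Mconst χ1 χ2 lam1 lam2 μ1 μ2 := by linarith
  rw [M0const, div_lt_iff₀ hc] at hM0
  refine (hsol.deriv_time_eq_expandedRhs ha hb htr ht hxI).trans_le ?_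
  rw [expandedRhs, hux.deriv]
  linarith [mul_le_mul_of_nonneg_left hchem hU, mul_le_mul_of_nonneg_left hM0.le hU,
    mul_le_mul_of_nonneg_left (ha.le_supOn (t := t) hx.1) hU,
    mul_le_mul_of_nonneg_right (hb.infOn_le (t := t) hx.1) (mul_nonneg hU hU)]

theorem exists_isMaxOn_deriv_time_pos {T : ℝ}
    (hsol : IsSol ν χ1 χ2 lam1 lam2 μ1 μ2 a b (Icc 0 T) (Ioc 0 T) u v1 v2 h)
    {t₁ t₂ : ℝ} (ht₁ : t₁ ∈ Icc 0 T) (ht₂ : t₂ ∈ Icc 0 T) (ht₁₂ : t₁ ≤ t₂)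
    (hlt : sSup (u t₁ '' Icc 0 (h t₁)) < sSup (u t₂ '' Icc 0 (h t₂))) :
    ∃ t ∈ Ioc 0 T, ∃ x ∈ Ico 0 (h t),
      IsMaxOn (u t) (Icc 0 (h t)) x ∧ 0 < deriv (fun s => u s x) t := by
  have hsub : Icc t₁ t₂ ⊆ Icc 0 T := Icc_subset_Icc ht₁.1 ht₂.2
  have hbdd : BddAbove (u t₁ '' Icc 0 (h t₁)) :=
    (isCompact_Icc.image_of_continuousOn (hsol.u_cont.slice_Icc ht₁)).bddAbove
  have h0 : (0 : ℝ) ∈ Icc 0 (h t₁) := ⟨le_rfl, (hsol.h_pos t₁ ht₁).le⟩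
  have hS₀ : 0 ≤ sSup (u t₁ '' Icc 0 (h t₁)) :=
    (hsol.u_nonneg t₁ ht₁ 0 h0).trans (le_csSup hbdd (mem_image_of_mem _ h0))
  obtain ⟨_, ⟨x₂, hx₂, rfl⟩, hx₂S⟩ :=
    exists_lt_of_lt_csSup ((nonempty_Icc.2 (hsol.h_pos t₂ ht₂).le).image _) hlt
  obtain ⟨δ, hδ, t, ht, x, hx, hmax⟩ := exists_interior_max_sub_mul_of_lt
    (ht₁₂.lt_of_ne (by rintro rfl; exact hlt.false))
    (fun s hs => (hsol.h_deriv s (hsub hs)).continuousAt.continuousWithinAt)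
    (hsol.u_cont.mono fun p hp => ⟨hsub hp.1, hp.2⟩)
    (fun x hx => le_csSup hbdd (mem_image_of_mem _ hx))
    (fun s hs => (hsol.bch s (hsub hs)).1.trans_le hS₀) hx₂ hx₂S
  have htT : t ∈ Ioc 0 T := ⟨ht₁.1.trans_lt ht.1, ht.2.trans ht₂.2⟩
  refine ⟨t, htT, x, hx, fun y hy => ?_, hδ.trans_le ?_⟩
  · exact sub_le_sub_iff_right _ |>.mp (hmax t ⟨ht.1.le, ht.2⟩ y hy)
  · have hnear : ∀ᶠ s in 𝓝 t, x < h s :=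
      (hsol.h_deriv t (hsub ⟨ht.1.le, ht.2⟩)).continuousAt.eventually (lt_mem_nhds hx.2)
    refine (hsol.u_diff_t t htT x (Ico_subset_Icc_self hx)).hasDerivAt
      |>.le_of_eventually_sub_mul_le_left ?_
    filter_upwards [nhdsWithin_le_nhds hnear, Ioo_mem_nhdsLT ht.1] with s hxs hs
    exact hmax s ⟨hs.1.le, hs.2.le.trans ht.2⟩ x ⟨hx.1, hxs.le⟩

end IsSol

theorem stmt3_general (ν χ1 χ2 lam1 lam2 μ1 μ2 : ℝ) (a b : ℝ → ℝ → ℝ)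
    (hχ1 : 0 ≤ χ1) (hχ2 : 0 ≤ χ2) (hμ1 : 0 ≤ μ1) (hμ2 : 0 ≤ μ2)
    (hlam1 : 0 < lam1) (hlam2 : 0 < lam2) (ha : Coeff a) (hb : Coeff b)
    (hH1 : χ1 * μ1 - χ2 * μ2 + Mconst χ1 χ2 lam1 lam2 μ1 μ2 < infOn b)
    (T : ℝ) (u v1 v2 : ℝ → ℝ → ℝ) (h : ℝ → ℝ)
    (hsol : IsSol ν χ1 χ2 lam1 lam2 μ1 μ2 a b (Icc 0 T) (Ioc 0 T) u v1 v2 h)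
    (hbig : ∀ t ∈ Icc 0 T, M0const χ1 χ2 lam1 lam2 μ1 μ2 a b < sSup (u t '' Icc 0 (h t))) :
    ∀ t1 ∈ Icc 0 T, ∀ t2 ∈ Icc 0 T, t1 ≤ t2 →
      sSup (u t2 '' Icc 0 (h t2)) ≤ sSup (u t1 '' Icc 0 (h t1)) := by
  intro t1 ht1 t2 ht2 h12
  by_contra! hlt
  obtain ⟨t, ht, x, hx, hmax, hpos⟩ := hsol.exists_isMaxOn_deriv_time_pos ht1 ht2 h12 hlt
  have hM0 := hbig t (Ioc_subset_Icc_self ht)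
  rw [sSup_image', hmax.iSup_eq (Ico_subset_Icc_self hx)] at hM0
  exact hpos.not_ge <| hsol.deriv_time_nonpos_of_isMaxOn hχ1 hχ2 hμ1 hμ2 hlam1 hlam2 ha hb hH1 ht
    (Ioc_subset_Icc_self ht) hx hmax hM0

/-- if the sup of u stays above M0, it is nonincreasing in time. -/
theorem stmt3 (ν χ1 χ2 lam1 lam2 μ1 μ2 : ℝ) (a b : ℝ → ℝ → ℝ)
    (hν : 0 < ν) (hχ1 : 0 ≤ χ1) (hχ2 : 0 ≤ χ2) (hμ1 : 0 ≤ μ1) (hμ2 : 0 ≤ μ2)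
    (hlam1 : 0 < lam1) (hlam2 : 0 < lam2) (ha : Coeff a) (hb : Coeff b)
    (hH1 : χ1 * μ1 - χ2 * μ2 + Mconst χ1 χ2 lam1 lam2 μ1 μ2 < infOn b)
    (u0 : ℝ → ℝ) (h0 : ℝ) (hinit : AdmissibleInit u0 h0)
    (T : ℝ) (hT : 0 < T) (u v1 v2 : ℝ → ℝ → ℝ) (h : ℝ → ℝ)
    (hsol : IsSol ν χ1 χ2 lam1 lam2 μ1 μ2 a b (Icc 0 T) (Ioc 0 T) u v1 v2 h)
    (hh0 : h 0 = h0) (hu0 : ∀ x ∈ Icc 0 h0, u 0 x = u0 x)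
    (hbig : ∀ t ∈ Icc 0 T, M0const χ1 χ2 lam1 lam2 μ1 μ2 a b < sSup (u t '' Icc 0 (h t))) :
    ∀ t1 ∈ Icc 0 T, ∀ t2 ∈ Icc 0 T, t1 ≤ t2 →
      sSup (u t2 '' Icc 0 (h t2)) ≤ sSup (u t1 '' Icc 0 (h t1)) :=
  stmt3_general ν χ1 χ2 lam1 lam2 μ1 μ2 a b hχ1 hχ2 hμ1 hμ2 hlam1 hlam2 ha hb hH1 T u v1 v2 h hsol
    hbig
end

section
/- Let L > 0, let u : [0, L] → ℝ be continuous with u ≥ 0, and let v1, v2 ∈ C²([0, L]) satisfy v_i''(x) − λ_i v_i(x) + μ_i u(x) = 0 for all x ∈ [0, L] and v_i'(0) = v_i'(L) = 0, for i = 1, 2. Then χ2 λ2 v2(x) − χ1 λ1 v1(x) ≤ M · sup_{[0,L]} u for every x ∈ [0, L]. -/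
/-!
At a maximum point `x₀` of `w` on `[a, b]` the Neumann condition gives `w' x₀ = 0` also at an
endpoint, and then `w'' x₀ ≤ 0`: otherwise `w'` changes sign from `-` to `+` at `x₀`, so `w`
increases on whichever side of `x₀` still lies in `[a, b]`. Hence `λ w - w'' ≤ B` with `λ ≥ 0`
gives `λ w ≤ λ w x₀ ≤ B` everywhere: the maximum principle for the Neumann problem.

It yields `0 ≤ λᵢ vᵢ ≤ μᵢ S` with `S = sup u`. For `w = χ₂ λ₂ v₂ - χ₁ λ₁ v₁` and
`c = χ₂ μ₂ λ₂ - χ₁ μ₁ λ₁` the two equations give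
`λ₂ w - w'' = c u + χ₁ (λ₁ - λ₂) λ₁ v₁` and `λ₁ w - w'' = c u + χ₂ (λ₁ - λ₂) λ₂ v₂`,
both bounded via `c y ≤ c₊ S` for `0 ≤ y ≤ S`; the maximum principle with `λ = λ₂` and
`λ = λ₁` gives the two terms of the minimum `M`.
-/

open Set

open Filter Topology

section MaximumPrinciple

variable {w w' : ℝ → ℝ} {a b x₀ : ℝ}

theorem eventually_nhdsGT_lt_of_deriv_eq_zero_of_second_deriv_pos {w'' : ℝ}
    (hw : ∀ᶠ t in 𝓝[≥] x₀, HasDerivAt w (w' t) t) (h₀ : w' x₀ = 0)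
    (h₂ : HasDerivAt w' w'' x₀) (hpos : 0 < w'') : ∀ᶠ t in 𝓝[>] x₀, w x₀ < w t := by
  have hw'_pos : ∀ᶠ t in 𝓝[>] x₀, 0 < w' t := by
    filter_upwards [((hasDerivAt_iff_tendsto_slope.1 h₂).mono_left
      (nhdsGT_le_nhdsNE x₀)).eventually (eventually_gt_nhds hpos), self_mem_nhdsWithin]
      with t hslope (hxt : x₀ < t)
    rwa [slope_def_field, h₀, sub_zero, div_pos_iff_of_pos_right (sub_pos.2 hxt)] at hslope
  rw [eventually_nhdsWithin_iff] at hw'_pos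
  obtain ⟨c, hxc : x₀ < c, hc⟩ :=
    mem_nhdsGE_iff_exists_Ico_subset.1 (hw.and (nhdsWithin_le_nhds hw'_pos))
  filter_upwards [Ioo_mem_nhdsGT hxc] with t ht
  have hsub : Icc x₀ t ⊆ Ico x₀ c := Icc_subset_Ico_right ht.2
  refine strictMonoOn_of_hasDerivWithinAt_pos (f' := w') (convex_Icc x₀ t)
    (fun y hy => (hc (hsub hy)).1.continuousAt.continuousWithinAt) (fun y hy => ?_)
    (fun y hy => ?_) (left_mem_Icc.2 ht.1.le) (right_mem_Icc.2 ht.1.le) ht.1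
  · exact (hc (hsub (interior_subset hy))).1.hasDerivWithinAt
  · rw [interior_Icc] at hy
    exact (hc (hsub (Ioo_subset_Icc_self hy))).2 hy.1

theorem eventually_nhdsLT_lt_of_deriv_eq_zero_of_second_deriv_pos {w'' : ℝ}
    (hw : ∀ᶠ t in 𝓝[≤] x₀, HasDerivAt w (w' t) t) (h₀ : w' x₀ = 0)
    (h₂ : HasDerivAt w' w'' x₀) (hpos : 0 < w'') : ∀ᶠ t in 𝓝[<] x₀, w x₀ < w t := by
  have hw'_neg : ∀ᶠ t in 𝓝[<] x₀, w' t < 0 := by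
    filter_upwards [((hasDerivAt_iff_tendsto_slope.1 h₂).mono_left
      (nhdsLT_le_nhdsNE x₀)).eventually (eventually_gt_nhds hpos), self_mem_nhdsWithin]
      with t hslope (htx : t < x₀)
    rwa [slope_comm, slope_def_field, h₀, zero_sub, div_pos_iff_of_pos_right (sub_pos.2 htx),
      neg_pos] at hslope
  rw [eventually_nhdsWithin_iff] at hw'_neg
  obtain ⟨c, hcx : c < x₀, hc⟩ :=
    mem_nhdsLE_iff_exists_Ioc_subset.1 (hw.and (nhdsWithin_le_nhds hw'_neg))
  filter_upwards [Ioo_mem_nhdsLT hcx] with t ht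
  have hsub : Icc t x₀ ⊆ Ioc c x₀ := Icc_subset_Ioc_left ht.1
  refine strictAntiOn_of_hasDerivWithinAt_neg (f' := w') (convex_Icc t x₀)
    (fun y hy => (hc (hsub hy)).1.continuousAt.continuousWithinAt) (fun y hy => ?_)
    (fun y hy => ?_) (left_mem_Icc.2 ht.2.le) (right_mem_Icc.2 ht.2.le) ht.2
  · exact (hc (hsub (interior_subset hy))).1.hasDerivWithinAt
  · rw [interior_Icc] at hy
    exact (hc (hsub (Ioo_subset_Icc_self hy))).2 hy.2

theorem IsMaxOn.second_deriv_nonpos_Icc {w'' : ℝ} (hab : a < b) (hx₀ : x₀ ∈ Icc a b)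
    (hmax : IsMaxOn w (Icc a b) x₀) (hw : ∀ x ∈ Icc a b, HasDerivAt w (w' x) x)
    (h₀ : w' x₀ = 0) (h₂ : HasDerivAt w' w'' x₀) : w'' ≤ 0 := by
  by_contra! hpos
  rcases hx₀.2.lt_or_eq with hxb | rfl
  · have hIcc : Icc a b ∈ 𝓝[≥] x₀ :=
      mem_of_superset (Icc_mem_nhdsGE hxb) (Icc_subset_Icc_left hx₀.1)
    obtain ⟨t, hlt, ht⟩ := ((eventually_nhdsGT_lt_of_deriv_eq_zero_of_second_deriv_pos
      (eventually_of_mem hIcc hw) h₀ h₂ hpos).and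
      (nhdsWithin_mono _ Ioi_subset_Ici_self hIcc)).exists
    exact (hmax ht).not_gt hlt
  · have hIcc : Icc a x₀ ∈ 𝓝[≤] x₀ := Icc_mem_nhdsLE hab
    obtain ⟨t, hlt, ht⟩ := ((eventually_nhdsLT_lt_of_deriv_eq_zero_of_second_deriv_pos
      (eventually_of_mem hIcc hw) h₀ h₂ hpos).and
      (nhdsWithin_mono _ Iio_subset_Iic_self hIcc)).exists
    exact (hmax ht).not_gt hlt

theorem IsMaxOn.deriv_eq_zero_of_neumann (hx₀ : x₀ ∈ Icc a b) (hmax : IsMaxOn w (Icc a b) x₀)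
    (hw : HasDerivAt w (w' x₀) x₀) (ha : w' a = 0) (hb : w' b = 0) : w' x₀ = 0 := by
  rcases hx₀.1.eq_or_lt with rfl | hax
  · exact ha
  rcases hx₀.2.eq_or_lt with rfl | hxb
  · exact hb
  exact (hmax.isLocalMax (Icc_mem_nhds hax hxb)).hasDerivAt_eq_zero hw

theorem mul_le_of_neumann {w'' : ℝ → ℝ} {lam B : ℝ} (hab : a < b) (hlam : 0 ≤ lam)
    (hw : ∀ x ∈ Icc a b, HasDerivAt w (w' x) x)
    (hw' : ∀ x ∈ Icc a b, HasDerivAt w' (w'' x) x)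
    (hB : ∀ x ∈ Icc a b, lam * w x - w'' x ≤ B) (ha : w' a = 0) (hb : w' b = 0) :
    ∀ x ∈ Icc a b, lam * w x ≤ B := by
  obtain ⟨x₀, hx₀, hmax⟩ := isCompact_Icc.exists_isMaxOn (nonempty_Icc.2 hab.le)
    fun x hx => (hw x hx).continuousAt.continuousWithinAt
  have h₀ := hmax.deriv_eq_zero_of_neumann hx₀ (hw x₀ hx₀) ha hb
  have h₂ := hmax.second_deriv_nonpos_Icc hab hx₀ hw h₀ (hw' x₀ hx₀)
  intro x hx
  calc lam * w x ≤ lam * w x₀ := mul_le_mul_of_nonneg_left (hmax hx) hlam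
    _ ≤ B := by linarith [hB x₀ hx₀]

theorem mul_mem_Icc_of_neumann {w'' : ℝ → ℝ} {lam A B : ℝ} (hab : a < b) (hlam : 0 ≤ lam)
    (hw : ∀ x ∈ Icc a b, HasDerivAt w (w' x) x)
    (hw' : ∀ x ∈ Icc a b, HasDerivAt w' (w'' x) x)
    (hAB : ∀ x ∈ Icc a b, lam * w x - w'' x ∈ Icc A B) (ha : w' a = 0) (hb : w' b = 0) :
    ∀ x ∈ Icc a b, lam * w x ∈ Icc A B := by
  have upper := mul_le_of_neumann hab hlam hw hw' (fun x hx => (hAB x hx).2) ha hb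
  have lower := mul_le_of_neumann (w := fun x => -w x) (w' := fun x => -w' x)
    (w'' := fun x => -w'' x) (B := -A) hab hlam (fun x hx => (hw x hx).neg)
    (fun x hx => (hw' x hx).neg) (fun x hx => by linarith [(hAB x hx).1])
    (by simp [ha]) (by simp [hb])
  exact fun x hx => ⟨by linarith [lower x hx], upper x hx⟩

end MaximumPrinciple

theorem mul_mem_Icc_of_neumann_solution {a b lam μ S : ℝ} {u v v' v'' : ℝ → ℝ} (hab : a < b)
    (hlam : 0 ≤ lam) (hμ : 0 ≤ μ) (hv : ∀ x ∈ Icc a b, HasDerivAt v (v' x) x)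
    (hv' : ∀ x ∈ Icc a b, HasDerivAt v' (v'' x) x)
    (heq : ∀ x ∈ Icc a b, v'' x - lam * v x + μ * u x = 0)
    (hu : ∀ x ∈ Icc a b, u x ∈ Icc 0 S) (ha : v' a = 0) (hb : v' b = 0) :
    ∀ x ∈ Icc a b, lam * v x ∈ Icc 0 (μ * S) :=
  mul_mem_Icc_of_neumann hab hlam hv hv' (fun x hx => by
    rw [show lam * v x - v'' x = μ * u x by linarith [heq x hx]]
    exact ⟨mul_nonneg hμ (hu x hx).1, mul_le_mul_of_nonneg_left (hu x hx).2 hμ⟩) ha hb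

theorem mul_sub_le_of_neumann {a b k₁ k₂ lam B : ℝ} {v₁ v₁' v₁'' v₂ v₂' v₂'' : ℝ → ℝ}
    (hab : a < b) (hlam : 0 ≤ lam) (hv₁ : ∀ x ∈ Icc a b, HasDerivAt v₁ (v₁' x) x)
    (hv₁' : ∀ x ∈ Icc a b, HasDerivAt v₁' (v₁'' x) x) (hbc₁ : v₁' a = 0 ∧ v₁' b = 0)
    (hv₂ : ∀ x ∈ Icc a b, HasDerivAt v₂ (v₂' x) x)
    (hv₂' : ∀ x ∈ Icc a b, HasDerivAt v₂' (v₂'' x) x) (hbc₂ : v₂' a = 0 ∧ v₂' b = 0)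
    (hB : ∀ x ∈ Icc a b, lam * (k₂ * v₂ x - k₁ * v₁ x) - (k₂ * v₂'' x - k₁ * v₁'' x) ≤ B) :
    ∀ x ∈ Icc a b, lam * (k₂ * v₂ x - k₁ * v₁ x) ≤ B :=
  mul_le_of_neumann hab hlam
    (fun x hx => ((hv₂ x hx).const_mul k₂).fun_sub ((hv₁ x hx).const_mul k₁))
    (fun x hx => ((hv₂' x hx).const_mul k₂).fun_sub ((hv₁' x hx).const_mul k₁)) hB
    (by simp [hbc₁.1, hbc₂.1]) (by simp [hbc₁.2, hbc₂.2])

theorem mul_le_pp_mul {c y S : ℝ} (hy : y ∈ Icc 0 S) : c * y ≤ pp c * S :=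
  (mul_le_mul_of_nonneg_right (le_max_left c 0) hy.1).trans
    (mul_le_mul_of_nonneg_left hy.2 (le_max_right c 0))

theorem stmt4_general (χ1 χ2 lam1 lam2 μ1 μ2 L : ℝ)
    (hχ1 : 0 ≤ χ1) (hχ2 : 0 ≤ χ2) (hμ1 : 0 ≤ μ1) (hμ2 : 0 ≤ μ2)
    (hlam1 : 0 < lam1) (hlam2 : 0 < lam2) (hL : 0 < L)
    (u v1 v1' v1'' v2 v2' v2'' : ℝ → ℝ)
    (hu_cont : ContinuousOn u (Icc 0 L)) (hu_nonneg : ∀ x ∈ Icc 0 L, 0 ≤ u x)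
    (hv1d : ∀ x ∈ Icc 0 L, HasDerivAt v1 (v1' x) x)
    (hv1dd : ∀ x ∈ Icc 0 L, HasDerivAt v1' (v1'' x) x)
    (heq1 : ∀ x ∈ Icc 0 L, v1'' x - lam1 * v1 x + μ1 * u x = 0)
    (hbc1 : v1' 0 = 0 ∧ v1' L = 0)
    (hv2d : ∀ x ∈ Icc 0 L, HasDerivAt v2 (v2' x) x)
    (hv2dd : ∀ x ∈ Icc 0 L, HasDerivAt v2' (v2'' x) x)
    (heq2 : ∀ x ∈ Icc 0 L, v2'' x - lam2 * v2 x + μ2 * u x = 0)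
    (hbc2 : v2' 0 = 0 ∧ v2' L = 0) :
    ∀ x ∈ Icc 0 L,
      χ2 * lam2 * v2 x - χ1 * lam1 * v1 x ≤ Mconst χ1 χ2 lam1 lam2 μ1 μ2 * sSup (u '' Icc 0 L) := by
  intro x hx
  set S := sSup (u '' Icc 0 L)
  set c := χ2 * μ2 * lam2 - χ1 * μ1 * lam1
  have hu : ∀ y ∈ Icc 0 L, u y ∈ Icc 0 S := fun y hy =>
    ⟨hu_nonneg y hy, le_csSup (isCompact_Icc.bddAbove_image hu_cont) (mem_image_of_mem u hy)⟩
  have hv1 := mul_mem_Icc_of_neumann_solution hL hlam1.le hμ1 hv1d hv1dd heq1 hu hbc1.1 hbc1.2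
  have hv2 := mul_mem_Icc_of_neumann_solution hL hlam2.le hμ2 hv2d hv2dd heq2 hu hbc2.1 hbc2.2
  have hbound2 := mul_sub_le_of_neumann hL hlam2.le hv1d hv1dd hbc1 hv2d hv2dd hbc2
    (k₁ := χ1 * lam1) (k₂ := χ2 * lam2) (B := (pp c + χ1 * μ1 * pp (lam1 - lam2)) * S)
    (fun y hy => calc
      _ = c * u y + χ1 * ((lam1 - lam2) * (lam1 * v1 y)) := by
        linear_combination χ1 * lam1 * heq1 y hy - χ2 * lam2 * heq2 y hy
      _ ≤ pp c * S + χ1 * (pp (lam1 - lam2) * (μ1 * S)) := add_le_add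
        (mul_le_pp_mul (hu y hy)) (mul_le_mul_of_nonneg_left (mul_le_pp_mul (hv1 y hy)) hχ1)
      _ = _ := by ring) x hx
  have hbound1 := mul_sub_le_of_neumann hL hlam1.le hv1d hv1dd hbc1 hv2d hv2dd hbc2
    (k₁ := χ1 * lam1) (k₂ := χ2 * lam2) (B := (pp c + χ2 * μ2 * pp (lam1 - lam2)) * S)
    (fun y hy => calc
      _ = c * u y + χ2 * ((lam1 - lam2) * (lam2 * v2 y)) := by
        linear_combination χ1 * lam1 * heq1 y hy - χ2 * lam2 * heq2 y hy
      _ ≤ pp c * S + χ2 * (pp (lam1 - lam2) * (μ2 * S)) := add_le_add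
        (mul_le_pp_mul (hu y hy)) (mul_le_mul_of_nonneg_left (mul_le_pp_mul (hv2 y hy)) hχ2)
      _ = _ := by ring) x hx
  rw [Mconst, min_mul_of_nonneg _ _ ((hu x hx).1.trans (hu x hx).2)]
  exact le_min ((le_div_iff₀' hlam2).2 hbound2 |>.trans_eq (by ring))
    ((le_div_iff₀' hlam1).2 hbound1 |>.trans_eq (by ring))

/-- pointwise bound on χ2 λ2 v2 − χ1 λ1 v1 for Neumann solutions of the
elliptic equations on [0, L]. -/
theorem stmt4 (χ1 χ2 lam1 lam2 μ1 μ2 L : ℝ)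
    (hχ1 : 0 ≤ χ1) (hχ2 : 0 ≤ χ2) (hμ1 : 0 ≤ μ1) (hμ2 : 0 ≤ μ2)
    (hlam1 : 0 < lam1) (hlam2 : 0 < lam2) (hL : 0 < L)
    (u v1 v1' v1'' v2 v2' v2'' : ℝ → ℝ)
    (hu_cont : ContinuousOn u (Icc 0 L)) (hu_nonneg : ∀ x ∈ Icc 0 L, 0 ≤ u x)
    (hv1d : ∀ x ∈ Icc 0 L, HasDerivAt v1 (v1' x) x)
    (hv1dd : ∀ x ∈ Icc 0 L, HasDerivAt v1' (v1'' x) x)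
    (hv1c : ContinuousOn v1'' (Icc 0 L))
    (heq1 : ∀ x ∈ Icc 0 L, v1'' x - lam1 * v1 x + μ1 * u x = 0)
    (hbc1 : v1' 0 = 0 ∧ v1' L = 0)
    (hv2d : ∀ x ∈ Icc 0 L, HasDerivAt v2 (v2' x) x)
    (hv2dd : ∀ x ∈ Icc 0 L, HasDerivAt v2' (v2'' x) x)
    (hv2c : ContinuousOn v2'' (Icc 0 L))
    (heq2 : ∀ x ∈ Icc 0 L, v2'' x - lam2 * v2 x + μ2 * u x = 0)
    (hbc2 : v2' 0 = 0 ∧ v2' L = 0) :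
    ∀ x ∈ Icc 0 L,
      χ2 * lam2 * v2 x - χ1 * lam1 * v1 x ≤ Mconst χ1 χ2 lam1 lam2 μ1 μ2 * sSup (u '' Icc 0 L) :=
  stmt4_general χ1 χ2 lam1 lam2 μ1 μ2 L hχ1 hχ2 hμ1 hμ2 hlam1 hlam2 hL u v1 v1' v1'' v2 v2' v2''
    hu_cont hu_nonneg hv1d hv1dd heq1 hbc1 hv2d hv2dd heq2 hbc2
end

section
/- Let λ > 0 and μ ≥ 0. For every ε > 0 there exists R0 > 0 such that for every R ≥ R0 there exists C > 0 with the following property: for every L > 2R, every x0 ∈ (R, L − R), every continuous u : [0, L] → ℝ with u ≥ 0, and every v ∈ C²([0, L]) satisfying v'' − λ v + μ u = 0 on [0, L] with v'(0) = v'(L) = 0, one has |v'(x)| + λ v(x) ≤ C · sup_{[x0−R, x0+R]} u + ε · sup_{[0,L]} u for all x ∈ [x0 − R/2, x0 + R/2]. -/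
/-!
Both bounds on `v` come from the maximum principle for `z'' ≥ λ z`: at a positive maximum of `z`
the derivative vanishes (by Fermat inside, by the boundary condition at an end point) and the
second derivative is nonpositive. Globally this gives `0 ≤ λ v ≤ μ sup u`. On
`[x0 - R, x0 + R]` the barrier `μ sup_loc u + μ sup u (e^{√λ (x - x0 - R)} + e^{√λ (x0 - R - x)})`
dominates `λ v`, and its exponential part is at most `2 μ sup u e^{-√λ R / 4}` on
`[x0 - 3R/4, x0 + 3R/4]`. On the unit interval around `x` the mean value theorem, applied to `v`
and to `v'' = λ v - μ u`, bounds `v' x`; the global term is small once `R` is large.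
-/

open Set Filter Topology Real

section

variable {v v' v'' f : ℝ → ℝ} {a b lam K B : ℝ}

theorem deriv2_nonpos_of_isMaxOn_Icc {c q : ℝ} (hab : a < b) (hc : c ∈ Icc a b)
    (hmax : IsMaxOn v (Icc a b) c) (hv : ∀ x ∈ Icc a b, HasDerivAt v (v' x) x)
    (hv'c : v' c = 0) (hq : HasDerivAt v' q c) : q ≤ 0 := by
  by_contra! hq0
  have hslope : ∀ᶠ x in 𝓝[≠] c, 0 < slope v' c x :=
    (hasDerivAt_iff_tendsto_slope.mp hq).eventually (eventually_gt_nhds hq0)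
  have hvc : ContinuousOn v (Icc a b) := fun x hx => (hv x hx).continuousAt.continuousWithinAt
  rcases hc.2.lt_or_eq with hcb | rfl
  · obtain ⟨e, hce, he⟩ : ∃ e ∈ Ioi c, Ioo c e ⊆ {x | 0 < v' x} := by
      refine mem_nhdsGT_iff_exists_Ioo_subset.mp ?_
      filter_upwards [nhdsGT_le_nhdsNE c hslope, self_mem_nhdsWithin] with x hx hcx
      exact pos_of_slope_pos hcx hx hv'c
    have hcd : c < min e b := lt_min hce hcb
    have hsub : Icc c (min e b) ⊆ Icc a b := Icc_subset_Icc hc.1 (min_le_right _ _)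
    obtain ⟨ξ, hξ, hξv⟩ := exists_hasDerivAt_eq_slope v v' hcd (hvc.mono hsub)
      fun x hx => hv x (hsub (Ioo_subset_Icc_self hx))
    have hincr : 0 < (v (min e b) - v c) / (min e b - c) :=
      hξv ▸ he ⟨hξ.1, hξ.2.trans_le (min_le_left _ _)⟩
    have hle : v (min e b) ≤ v c := hmax (hsub (right_mem_Icc.mpr hcd.le))
    linarith [(div_pos_iff_of_pos_right (sub_pos.2 hcd)).mp hincr]
  · obtain ⟨e, hec, he⟩ : ∃ e ∈ Iio c, Ioo e c ⊆ {x | v' x < 0} := by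
      refine mem_nhdsLT_iff_exists_Ioo_subset.mp ?_
      filter_upwards [nhdsLT_le_nhdsNE c hslope, self_mem_nhdsWithin] with x hx hxc
      exact neg_of_slope_pos hxc hx hv'c
    have hdc : max e a < c := max_lt hec hab
    have hsub : Icc (max e a) c ⊆ Icc a c := Icc_subset_Icc (le_max_right _ _) le_rfl
    obtain ⟨ξ, hξ, hξv⟩ := exists_hasDerivAt_eq_slope v v' hdc (hvc.mono hsub)
      fun x hx => hv x (hsub (Ioo_subset_Icc_self hx))
    have hdecr : (v c - v (max e a)) / (c - max e a) < 0 :=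
      hξv ▸ he ⟨(le_max_left _ _).trans_lt hξ.1, hξ.2⟩
    have hle : v (max e a) ≤ v c := hmax (hsub (left_mem_Icc.mpr hdc.le))
    exact hdecr.not_ge (div_nonneg (sub_nonneg.2 hle) (sub_pos.2 hdc).le)

theorem nonpos_of_mul_le_deriv2 (hlam : 0 < lam) (hab : a < b)
    (hv : ∀ x ∈ Icc a b, HasDerivAt v (v' x) x) (hv' : ∀ x ∈ Icc a b, HasDerivAt v' (v'' x) x)
    (hineq : ∀ x ∈ Icc a b, lam * v x ≤ v'' x) (ha : v a ≤ 0 ∨ v' a = 0)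
    (hb : v b ≤ 0 ∨ v' b = 0) : ∀ x ∈ Icc a b, v x ≤ 0 := by
  obtain ⟨c, hc, hmax⟩ := isCompact_Icc.exists_isMaxOn (nonempty_Icc.mpr hab.le)
    fun x hx => (hv x hx).continuousAt.continuousWithinAt
  refine fun x hx => (hmax hx).trans (not_lt.mp fun hvc => ?_)
  have hv'c : v' c = 0 := by
    rcases hc.1.eq_or_lt with rfl | hac
    · exact ha.resolve_left hvc.not_ge
    rcases hc.2.eq_or_lt with rfl | hcb
    · exact hb.resolve_left hvc.not_ge
    exact (hmax.isLocalMax (Icc_mem_nhds hac hcb)).hasDerivAt_eq_zero (hv c hc)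
  have := deriv2_nonpos_of_isMaxOn_Icc hab hc hmax hv hv'c (hv' c hc)
  nlinarith [hineq c hc]

theorem nonneg_of_neumann (hlam : 0 < lam) (hab : a < b)
    (hv : ∀ x ∈ Icc a b, HasDerivAt v (v' x) x) (hv' : ∀ x ∈ Icc a b, HasDerivAt v' (v'' x) x)
    (heq : ∀ x ∈ Icc a b, v'' x - lam * v x + f x = 0) (hf : ∀ x ∈ Icc a b, 0 ≤ f x)
    (hva : v' a = 0) (hvb : v' b = 0) : ∀ x ∈ Icc a b, 0 ≤ v x := by
  have := nonpos_of_mul_le_deriv2 (v := (- v ·)) (v' := (- v' ·)) (v'' := (- v'' ·)) hlam hab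
    (fun x hx => (hv x hx).neg) (fun x hx => (hv' x hx).neg)
    (fun x hx => by linarith [heq x hx, hf x hx]) (.inr (by simp [hva])) (.inr (by simp [hvb]))
  exact fun x hx => neg_nonpos.mp (this x hx)

theorem mul_le_of_neumann_s9 (hlam : 0 < lam) (hab : a < b)
    (hv : ∀ x ∈ Icc a b, HasDerivAt v (v' x) x) (hv' : ∀ x ∈ Icc a b, HasDerivAt v' (v'' x) x)
    (heq : ∀ x ∈ Icc a b, v'' x - lam * v x + f x = 0) (hf : ∀ x ∈ Icc a b, f x ≤ K)
    (hva : v' a = 0) (hvb : v' b = 0) : ∀ x ∈ Icc a b, lam * v x ≤ K := by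
  have := nonpos_of_mul_le_deriv2 (v := (lam * v · - K)) (v' := (lam * v' ·))
    (v'' := (lam * v'' ·)) hlam hab
    (fun x hx => ((hv x hx).const_mul lam).sub_const K) (fun x hx => (hv' x hx).const_mul lam)
    (fun x hx => by nlinarith [heq x hx, hf x hx]) (.inr (by simp [hva])) (.inr (by simp [hvb]))
  exact fun x hx => sub_nonpos.mp (this x hx)

theorem mul_le_add_exp_barrier {m p : ℝ} (hlam : 0 < lam) (hmp : m < p)
    (hv : ∀ x ∈ Icc m p, HasDerivAt v (v' x) x) (hv' : ∀ x ∈ Icc m p, HasDerivAt v' (v'' x) x)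
    (hineq : ∀ x ∈ Icc m p, lam * v x - K ≤ v'' x) (hB : 0 ≤ B)
    (hm : lam * v m ≤ K + B) (hp : lam * v p ≤ K + B) :
    ∀ x ∈ Icc m p, lam * v x ≤ K + B * (exp (√lam * (x - p)) + exp (√lam * (m - x))) := by
  set s := √lam
  have hs : s ^ 2 = lam := sq_sqrt hlam.le
  have hg : ∀ x, HasDerivAt (fun x => exp (s * (x - p)) + exp (s * (m - x)))
      (s * exp (s * (x - p)) - s * exp (s * (m - x))) x := fun x => by
    refine ((((hasDerivAt_id' x).sub_const p).const_mul s).exp.add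
      (((hasDerivAt_id' x).const_sub m).const_mul s).exp).congr_deriv ?_
    ring
  have hg' : ∀ x, HasDerivAt (fun x => s * exp (s * (x - p)) - s * exp (s * (m - x)))
      (lam * (exp (s * (x - p)) + exp (s * (m - x)))) x := fun x => by
    refine (((((hasDerivAt_id' x).sub_const p).const_mul s).exp.const_mul s).sub
      ((((hasDerivAt_id' x).const_sub m).const_mul s).exp.const_mul s)).congr_deriv ?_
    rw [← hs]
    ring
  have := nonpos_of_mul_le_deriv2
    (v := fun x => lam * v x - K - B * (exp (s * (x - p)) + exp (s * (m - x))))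
    (v' := fun x => lam * v' x - B * (s * exp (s * (x - p)) - s * exp (s * (m - x))))
    (v'' := fun x => lam * v'' x - B * (lam * (exp (s * (x - p)) + exp (s * (m - x))))) hlam hmp
    (fun x hx => (((hv x hx).const_mul lam).sub_const K).sub ((hg x).const_mul B))
    (fun x hx => ((hv' x hx).const_mul lam).sub ((hg' x).const_mul B))
    (fun x hx => by nlinarith [hineq x hx])
    (.inl (by simp only [sub_self, mul_zero, exp_zero]; nlinarith [exp_pos (s * (m - p))]))
    (.inl (by simp only [sub_self, mul_zero, exp_zero]; nlinarith [exp_pos (s * (m - p))]))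
  exact fun x hx => by linarith [this x hx]

theorem mul_le_of_neumann_of_local_le {m p d Kloc : ℝ} (hlam : 0 < lam) (hab : a < b)
    (hv : ∀ x ∈ Icc a b, HasDerivAt v (v' x) x) (hv' : ∀ x ∈ Icc a b, HasDerivAt v' (v'' x) x)
    (heq : ∀ x ∈ Icc a b, v'' x - lam * v x + f x = 0) (hf : ∀ x ∈ Icc a b, f x ≤ K)
    (hva : v' a = 0) (hvb : v' b = 0) (hK : 0 ≤ K) (hmp : m < p) (hsub : Icc m p ⊆ Icc a b)
    (hfloc : ∀ x ∈ Icc m p, f x ≤ Kloc) (hKloc : 0 ≤ Kloc) (hd : 0 ≤ d) :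
    ∀ x ∈ Icc (m + d) (p - d), lam * v x ≤ Kloc + 2 * K * exp (-(√lam * d)) := by
  have hglobal := mul_le_of_neumann_s9 hlam hab hv hv' heq hf hva hvb
  have hbarrier := mul_le_add_exp_barrier (K := Kloc) hlam hmp (fun x hx => hv x (hsub hx))
    (fun x hx => hv' x (hsub hx)) (fun x hx => by linarith [heq x (hsub hx), hfloc x hx]) hK
    (by linarith [hglobal m (hsub (left_mem_Icc.2 hmp.le))])
    (by linarith [hglobal p (hsub (right_mem_Icc.2 hmp.le))])
  intro x ⟨hmx, hxp⟩
  have hdecay : ∀ t ≤ -d, exp (√lam * t) ≤ exp (-(√lam * d)) := fun t ht =>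
    exp_le_exp.2 (by nlinarith [sqrt_nonneg lam])
  have := hbarrier x ⟨by linarith, by linarith⟩
  nlinarith [hdecay (x - p) (by linarith), hdecay (m - x) (by linarith)]

theorem abs_deriv_le_of_abs_le_of_abs_deriv2_le {V x : ℝ} (hab : a < b)
    (hv : ∀ x ∈ Icc a b, HasDerivAt v (v' x) x) (hv' : ∀ x ∈ Icc a b, HasDerivAt v' (v'' x) x)
    (hV : ∀ x ∈ Icc a b, |v x| ≤ V) (hK : ∀ x ∈ Icc a b, |v'' x| ≤ K) (hx : x ∈ Icc a b) :
    |v' x| ≤ 2 * V / (b - a) + K * (b - a) := by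
  obtain ⟨ξ, hξ, hξv⟩ := exists_hasDerivAt_eq_slope v v' hab
    (fun x hx => (hv x hx).continuousAt.continuousWithinAt)
    fun x hx => hv x (Ioo_subset_Icc_self hx)
  have hslope : |v' ξ| ≤ 2 * V / (b - a) := by
    rw [hξv, abs_div, abs_of_pos (sub_pos.2 hab)]
    gcongr
    linarith [abs_sub (v b) (v a), hV a (left_mem_Icc.2 hab.le), hV b (right_mem_Icc.2 hab.le)]
  have hlip : |v' x - v' ξ| ≤ K * |x - ξ| := by
    simpa only [Real.norm_eq_abs] using
      (convex_Icc a b).norm_image_sub_le_of_norm_hasDerivWithin_le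
        (fun y hy => (hv' y hy).hasDerivWithinAt)
        (fun y hy => (hK y hy).trans_eq' (Real.norm_eq_abs _)) (Ioo_subset_Icc_self hξ) hx
  have hdist : |x - ξ| ≤ b - a :=
    abs_sub_le_iff.2 ⟨by linarith [hx.2, hξ.1], by linarith [hx.1, hξ.2]⟩
  have hK0 : 0 ≤ K := (abs_nonneg _).trans (hK x hx)
  calc |v' x| ≤ |v' ξ| + |v' x - v' ξ| := by linarith [abs_sub_abs_le_abs_sub (v' x) (v' ξ)]
    _ ≤ 2 * V / (b - a) + K * (b - a) := by gcongr; exact hlip.trans (by gcongr)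

theorem abs_deriv_add_mul_le_of_bounds {W F x : ℝ} (hlam : 0 < lam)
    (hv : ∀ y ∈ Icc (x - 1 / 2) (x + 1 / 2), HasDerivAt v (v' y) y)
    (hv' : ∀ y ∈ Icc (x - 1 / 2) (x + 1 / 2), HasDerivAt v' (v'' y) y)
    (heq : ∀ y ∈ Icc (x - 1 / 2) (x + 1 / 2), v'' y - lam * v y + f y = 0)
    (hvW : ∀ y ∈ Icc (x - 1 / 2) (x + 1 / 2), 0 ≤ lam * v y ∧ lam * v y ≤ W)
    (hfF : ∀ y ∈ Icc (x - 1 / 2) (x + 1 / 2), 0 ≤ f y ∧ f y ≤ F) :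
    |v' x| + lam * v x ≤ (2 / lam + 2) * W + F := by
  have hvV : ∀ y ∈ Icc (x - 1 / 2) (x + 1 / 2), |v y| ≤ W / lam := fun y hy => by
    obtain ⟨h0, hW⟩ := hvW y hy
    rw [abs_of_nonneg (nonneg_of_mul_nonneg_right h0 hlam), le_div_iff₀' hlam]
    exact hW
  have hv''K : ∀ y ∈ Icc (x - 1 / 2) (x + 1 / 2), |v'' y| ≤ W + F := fun y hy => by
    rw [abs_le]
    constructor <;> linarith [heq y hy, hvW y hy, hfF y hy]
  have hv'x := abs_deriv_le_of_abs_le_of_abs_deriv2_le (by linarith) hv hv' hvV hv''K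
    (x := x) ⟨by linarith, by linarith⟩
  have hvx := (hvW x ⟨by linarith, by linarith⟩).2
  calc |v' x| + lam * v x
      ≤ 2 * (W / lam) / (x + 1 / 2 - (x - 1 / 2)) + (W + F) * (x + 1 / 2 - (x - 1 / 2)) + W := by
        gcongr
    _ = (2 / lam + 2) * W + F := by ring

theorem abs_deriv_add_mul_le_of_neumann {u : ℝ → ℝ} {μ x0 R M Mloc x : ℝ} (hlam : 0 < lam)
    (hμ : 0 ≤ μ) (hR : 2 ≤ R) (hsub : Icc (x0 - R) (x0 + R) ⊆ Icc a b)
    (hv : ∀ y ∈ Icc a b, HasDerivAt v (v' y) y) (hv' : ∀ y ∈ Icc a b, HasDerivAt v' (v'' y) y)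
    (heq : ∀ y ∈ Icc a b, v'' y - lam * v y + μ * u y = 0) (hva : v' a = 0) (hvb : v' b = 0)
    (hu0 : ∀ y ∈ Icc a b, 0 ≤ u y) (huM : ∀ y ∈ Icc a b, u y ≤ M)
    (huMloc : ∀ y ∈ Icc (x0 - R) (x0 + R), u y ≤ Mloc) (hx : x ∈ Icc (x0 - R / 2) (x0 + R / 2)) :
    |v' x| + lam * v x ≤
      ((2 / lam + 2) * μ + μ) * Mloc + 4 * (1 / lam + 1) * μ * exp (-(√lam * (R / 4))) * M := by
  have hx0 : x0 ∈ Icc (x0 - R) (x0 + R) := ⟨by linarith, by linarith⟩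
  have ha : a ≤ x0 - R := (hsub (left_mem_Icc.2 (by linarith))).1
  have hb : x0 + R ≤ b := (hsub (right_mem_Icc.2 (by linarith))).2
  have hab : a < b := by linarith
  have hM0 : 0 ≤ M := (hu0 x0 (hsub hx0)).trans (huM x0 (hsub hx0))
  have hMloc0 : 0 ≤ Mloc := (hu0 x0 (hsub hx0)).trans (huMloc x0 hx0)
  have hJ : Icc (x - 1 / 2) (x + 1 / 2) ⊆ Icc (x0 - R + R / 4) (x0 + R - R / 4) :=
    Icc_subset_Icc (by linarith [hx.1]) (by linarith [hx.2])
  have hJloc : Icc (x - 1 / 2) (x + 1 / 2) ⊆ Icc (x0 - R) (x0 + R) :=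
    hJ.trans (Icc_subset_Icc (by linarith) (by linarith))
  have hJab := hJloc.trans hsub
  have hv0 := nonneg_of_neumann hlam hab hv hv' heq (fun y hy => mul_nonneg hμ (hu0 y hy)) hva hvb
  have hvJ := mul_le_of_neumann_of_local_le (d := R / 4) hlam hab hv hv' heq
    (fun y hy => mul_le_mul_of_nonneg_left (huM y hy) hμ) hva hvb (mul_nonneg hμ hM0)
    (by linarith) hsub (fun y hy => mul_le_mul_of_nonneg_left (huMloc y hy) hμ)
    (mul_nonneg hμ hMloc0) (by linarith)
  calc |v' x| + lam * v x
      ≤ (2 / lam + 2) * (μ * Mloc + 2 * (μ * M) * exp (-(√lam * (R / 4)))) + μ * Mloc :=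
        abs_deriv_add_mul_le_of_bounds hlam (fun y hy => hv y (hJab hy))
          (fun y hy => hv' y (hJab hy)) (fun y hy => heq y (hJab hy))
          (fun y hy => ⟨mul_nonneg hlam.le (hv0 y (hJab hy)), hvJ y (hJ hy)⟩)
          (fun y hy => ⟨mul_nonneg hμ (hu0 y (hJab hy)),
            mul_le_mul_of_nonneg_left (huMloc y (hJloc hy)) hμ⟩)
    _ = ((2 / lam + 2) * μ + μ) * Mloc + 4 * (1 / lam + 1) * μ * exp (-(√lam * (R / 4))) * M := by
        ring

end

/-- interior version of the estimate: near x0, v' and λv are controlled by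
the sup of u on [x0−R, x0+R] plus a small multiple of the global sup of u. -/
theorem stmt9 (lam μ : ℝ) (hlam : 0 < lam) (hμ : 0 ≤ μ) :
    ∀ ε > (0:ℝ), ∃ R0 > (0:ℝ), ∀ R ≥ R0, ∃ C > (0:ℝ),
      ∀ L > 2 * R, ∀ x0 ∈ Ioo R (L - R), ∀ u v v' v'' : ℝ → ℝ,
        ContinuousOn u (Icc 0 L) → (∀ x ∈ Icc 0 L, 0 ≤ u x) →
        (∀ x ∈ Icc 0 L, HasDerivAt v (v' x) x) →
        (∀ x ∈ Icc 0 L, HasDerivAt v' (v'' x) x) →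
        ContinuousOn v'' (Icc 0 L) →
        (∀ x ∈ Icc 0 L, v'' x - lam * v x + μ * u x = 0) →
        v' 0 = 0 → v' L = 0 →
        ∀ x ∈ Icc (x0 - R / 2) (x0 + R / 2),
          |v' x| + lam * v x ≤ C * sSup (u '' Icc (x0 - R) (x0 + R)) + ε * sSup (u '' Icc 0 L) := by
  intro ε hε
  have hdecay : Tendsto (fun R => 4 * (1 / lam + 1) * μ * exp (-(√lam * (R / 4)))) atTop (𝓝 0) := by
    have hlin : Tendsto (fun R : ℝ => √lam * (R / 4)) atTop atTop :=
      (tendsto_id.atTop_div_const four_pos).const_mul_atTop (sqrt_pos.2 hlam)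
    simpa using (tendsto_exp_neg_atTop_nhds_zero.comp hlin).const_mul (4 * (1 / lam + 1) * μ)
  obtain ⟨R0, hR0⟩ := eventually_atTop.mp
    ((eventually_ge_atTop 2).and (hdecay.eventually (eventually_le_nhds hε)))
  refine ⟨R0, two_pos.trans_le (hR0 R0 le_rfl).1, fun R hR =>
    ⟨(2 / lam + 2) * μ + μ + 1, by positivity, ?_⟩⟩
  obtain ⟨hR2, hsmall⟩ := hR0 R hR
  intro L hL x0 ⟨hx0, hx0'⟩ u v v' v'' hu hu0 hv hv' _ heq hv'0 hv'L x hx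
  have hsub : Icc (x0 - R) (x0 + R) ⊆ Icc 0 L := Icc_subset_Icc (by linarith) (by linarith)
  have hx0mem : x0 ∈ Icc 0 L := hsub ⟨by linarith, by linarith⟩
  have huM : ∀ y ∈ Icc 0 L, u y ≤ sSup (u '' Icc 0 L) := fun y hy =>
    le_csSup (isCompact_Icc.image_of_continuousOn hu).bddAbove (mem_image_of_mem u hy)
  have huMloc : ∀ y ∈ Icc (x0 - R) (x0 + R), u y ≤ sSup (u '' Icc (x0 - R) (x0 + R)) :=
    fun y hy => le_csSup (isCompact_Icc.image_of_continuousOn (hu.mono hsub)).bddAbove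
      (mem_image_of_mem u hy)
  have hM0 := (hu0 x0 hx0mem).trans (huM x0 hx0mem)
  have hMloc0 := (hu0 x0 hx0mem).trans (huMloc x0 ⟨by linarith, by linarith⟩)
  exact (abs_deriv_add_mul_le_of_neumann hlam hμ hR2 hsub hv hv' heq hv'0 hv'L hu0 huM huMloc
    hx).trans (add_le_add (mul_le_mul_of_nonneg_right (by linarith) hMloc0)
      (mul_le_mul_of_nonneg_right hsmall hM0))
end
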